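/- arXiv:1407.5708 — 3 statements merged into one kernel-verified Lean document; each statement's English description precedes it below -/
import Mathlib

section
/- Let W be the ring of Witt vectors of an algebraically closed field k of odd characteristic p, let L be a finite free W-module, and let ψ : L → L be a W-linear automorphism of finite order coprime to p. If v ∈ L ⊗ k is an eigenvector of the induced map ψ ⊗ k on L ⊗ k, then there exists an eigenvector v̂ ∈ L of ψ whose reduction modulo p equals v. -/
/-!
Reduce the eigenvalue `μ` modulo `p` and take the Teichmüller lift `c` of the result: since
`ψ ^ N = 1` forces `μ̄ ^ N = 1`, `c` is an `N`-th root of unity in `W` with `c ≡ μ mod p`.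
For `ψ ^ N = 1` and `c ^ N = 1` the geometric-sum identity
`(ψ - c) * ∑ i < N, ψ ^ i * c ^ (N - 1 - i) = ψ ^ N - c ^ N = 0` shows that
`∑ i < N, c ^ (N - 1 - i) • ψ ^ i x` is a `c`-eigenvector for every `x`. For a lift `x` of `v`,
`c` times it reduces to `N • v`, and `N` is a unit of `W` because `p ∤ N`.
-/

open Finset

namespace Module.End

variable {R M Q : Type*} [CommRing R] [AddCommGroup M] [Module R M] [AddCommGroup Q] [Module R Q]

theorem geom_sum_apply_mem_eigenspace (f : Module.End R M) {N : ℕ} (hf : f ^ N = 1) {c : R}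
    (hc : c ^ N = 1) (x : M) :
    ∑ i ∈ range N, c ^ (N - 1 - i) • (f ^ i) x ∈ f.eigenspace c := by
  have h := (Algebra.commute_algebraMap_right c f).mul_geom_sum₂ N
  rw [hf, ← map_pow, hc, map_one, sub_self] at h
  rw [mem_eigenspace_iff, ← sub_eq_zero]
  simpa [LinearMap.sum_apply, smul_sum, smul_comm c, ← map_pow, smul_sub] using congr($h x)

theorem pow_apply_eq_pow_smul {f : Module.End R M} {c : R} {v : M} (hv : f v = c • v) (n : ℕ) :
    (f ^ n) v = c ^ n • v := by
  induction n with
  | zero => simp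
  | succ n ih => rw [pow_succ', mul_apply, ih, map_smul, hv, smul_smul, pow_succ]

theorem map_pow_apply_eq_pow_smul (π : M →ₗ[R] Q) {f : Module.End R M} {g : Module.End R Q}
    (hfg : π ∘ₗ f = g ∘ₗ π) {c : R} {v : Q} (hv : g v = c • v) {x : M} (hx : π x = v) (n : ℕ) :
    π ((f ^ n) x) = c ^ n • v := by
  rw [← LinearMap.comp_apply π, ← commute_pow_left_of_commute hfg.symm, LinearMap.comp_apply, hx,
    pow_apply_eq_pow_smul hv]

theorem exists_apply_eq_smul_and_map_eq (π : M →ₗ[R] Q) {f : Module.End R M}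
    {g : Module.End R Q} (hfg : π ∘ₗ f = g ∘ₗ π) {N : ℕ} (hN : IsUnit (N : R)) (hf : f ^ N = 1)
    {c : R} (hc : c ^ N = 1) {v : Q} (hv : g v = c • v) {x : M} (hx : π x = v) :
    ∃ y, f y = c • y ∧ π y = v := by
  set s := ∑ i ∈ range N, c ^ (N - 1 - i) • (f ^ i) x
  have hs : f s = c • s := mem_eigenspace_iff.mp (geom_sum_apply_mem_eigenspace f hf hc x)
  have hπs : π (c • s) = (N : R) • v := by
    have hterm : ∀ i ∈ range N, c • π (c ^ (N - 1 - i) • (f ^ i) x) = v := by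
      intro i hi
      have hexp : N - 1 - i + 1 + i = N := by have := mem_range.mp hi; omega
      rw [map_smul, map_pow_apply_eq_pow_smul π hfg hv hx, smul_smul, smul_smul, ← pow_succ',
        ← pow_add, hexp, hc, one_smul]
    rw [map_smul, map_sum, smul_sum, sum_congr rfl hterm, sum_const, card_range,
      Nat.cast_smul_eq_nsmul]
  refine ⟨(↑hN.unit⁻¹ : R) • c • s, ?_, ?_⟩
  · rw [map_smul, map_smul, hs]
    exact smul_comm _ _ _
  · rw [map_smul, hπs, smul_smul, hN.val_inv_mul, one_smul]

end Module.End

namespace WittVector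

variable {p : ℕ} [Fact p.Prime] {k : Type*} [Field k] [CharP k p]

theorem isUnit_iff_constantCoeff_ne_zero (x : WittVector p k) :
    IsUnit x ↔ constantCoeff x ≠ 0 :=
  ⟨fun h => (h.map constantCoeff).ne_zero, isUnit_of_coeff_zero_ne_zero x⟩

theorem constantCoeff_eq_zero_of_smul_eq_zero {Q : Type*} [AddCommGroup Q]
    [Module (WittVector p k) Q] {a : WittVector p k} {q : Q} (hq : q ≠ 0) (h : a • q = 0) :
    constantCoeff a = 0 := by
  by_contra ha
  exact hq (((isUnit_iff_constantCoeff_ne_zero a).mpr ha).smul_eq_zero.mp h)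

theorem mem_span_p_iff_constantCoeff_eq_zero [PerfectRing k p] (x : WittVector p k) :
    x ∈ Ideal.span {(p : WittVector p k)} ↔ constantCoeff x = 0 := by
  rw [← (IsDiscreteValuationRing.irreducible_iff_uniformizer _).mp (irreducible p (k := k)),
    IsLocalRing.mem_maximalIdeal, mem_nonunits_iff, isUnit_iff_constantCoeff_ne_zero, not_not]

theorem isUnit_natCast_of_not_dvd {n : ℕ} (hn : ¬p ∣ n) : IsUnit (n : WittVector p k) := by
  rw [isUnit_iff_constantCoeff_ne_zero, map_natCast]
  exact (CharP.cast_eq_zero_iff k p n).not.mpr hn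

theorem teichmuller_constantCoeff_smul [PerfectRing k p] {Q : Type*} [AddCommGroup Q]
    [Module (WittVector p k) Q]
    (hQ : Module.IsTorsionBySet (WittVector p k) Q (Ideal.span {(p : WittVector p k)}))
    (a : WittVector p k) (q : Q) : teichmuller p (constantCoeff a) • q = a • q := by
  have ha : a - teichmuller p (constantCoeff a) ∈ Ideal.span {(p : WittVector p k)} := by
    rw [mem_span_p_iff_constantCoeff_eq_zero, map_sub, sub_eq_zero]
    exact (teichmuller_coeff_zero p _).symm
  rw [eq_comm, ← sub_eq_zero, ← sub_smul]
  exact hQ (a := ⟨_, ha⟩)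

end WittVector

theorem stmt3_general (p : ℕ) [Fact p.Prime]
    (k : Type*) [Field k] [IsAlgClosed k] [CharP k p]
    (L : Type*) [AddCommGroup L] [Module (WittVector p k) L]
    (ψ : L ≃ₗ[WittVector p k] L) (N : ℕ) (hpN : ¬ p ∣ N)
    (hord : ψ ^ N = 1)
    -- the submodule `pL`, so that `L ⊗ k = L / pL`
    (pL : Submodule (WittVector p k) L)
    (hpL : pL = (Ideal.span {(p : WittVector p k)}) • (⊤ : Submodule (WittVector p k) L))
    -- `v` is a nonzero eigenvector of `ψ ⊗ k` : for every lift `x` of `v`,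
    -- `ψ x` reduces to `μ • v`
    (v : L ⧸ pL) (hv : v ≠ 0) (μ : WittVector p k)
    (heig : ∀ x : L, pL.mkQ x = v → pL.mkQ (ψ x) = μ • v) :
    ∃ vhat : L, (∃ c : WittVector p k, ψ vhat = c • vhat) ∧ vhat ≠ 0 ∧ pL.mkQ vhat = v := by
  have hf : ψ.toLinearMap ^ N = 1 := by
    have := congrArg LinearEquiv.automorphismGroup.toLinearMapMonoidHom hord
    rwa [map_pow, map_one] at this
  have hQ : Module.IsTorsionBySet (WittVector p k) (L ⧸ pL) (Ideal.span {(p : WittVector p k)}) :=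
    hpL ▸ Module.isTorsionBySet_quotient_ideal_smul L _
  set g := pL.mapQ pL ψ.toLinearMap (hpL ▸ Submodule.smul_top_le_comap_smul_top _ _)
  have hfg : pL.mkQ ∘ₗ ψ.toLinearMap = g ∘ₗ pL.mkQ := rfl
  obtain ⟨x, hx⟩ := pL.mkQ_surjective v
  have hμ : g v = μ • v := by rw [← heig x hx, ← hx]; rfl
  have hμN : WittVector.constantCoeff μ ^ N = 1 := by
    have h : (μ ^ N - 1) • v = 0 := by
      rw [sub_smul, one_smul, sub_eq_zero, ← Module.End.map_pow_apply_eq_pow_smul _ hfg hμ hx N,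
        hf, Module.End.one_apply, hx]
    have := WittVector.constantCoeff_eq_zero_of_smul_eq_zero hv h
    rwa [map_sub, map_pow, map_one, sub_eq_zero] at this
  obtain ⟨y, hy, hyv⟩ := Module.End.exists_apply_eq_smul_and_map_eq _ hfg
    (WittVector.isUnit_natCast_of_not_dvd hpN) hf
    (c := WittVector.teichmuller p (WittVector.constantCoeff μ)) (by rw [← map_pow, hμN, map_one])
    (by rw [hμ, WittVector.teichmuller_constantCoeff_smul hQ]) hx
  exact ⟨y, ⟨_, hy⟩, by rintro rfl; exact hv (by rw [← hyv, map_zero]), hyv⟩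

/-- Let `W = W(k)` be the Witt vectors of an algebraically closed field `k` of odd
characteristic `p`, `L` a finite free `W`-module and `ψ` a `W`-linear automorphism of
finite order coprime to `p`.  Every eigenvector `v` of the induced automorphism
`ψ ⊗ k` of `L ⊗ k = L/pL` lifts to an eigenvector `vhat ∈ L` of `ψ` reducing to `v`. -/
theorem stmt3 (p : ℕ) [Fact p.Prime] (hodd : Odd p)
    (k : Type*) [Field k] [IsAlgClosed k] [CharP k p]
    (L : Type*) [AddCommGroup L] [Module (WittVector p k) L]
    [Module.Finite (WittVector p k) L] [Module.Free (WittVector p k) L]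
    (ψ : L ≃ₗ[WittVector p k] L) (N : ℕ) (hN : 0 < N) (hpN : ¬ p ∣ N)
    (hord : ψ ^ N = 1)
    -- the submodule `pL`, so that `L ⊗ k = L / pL`
    (pL : Submodule (WittVector p k) L)
    (hpL : pL = (Ideal.span {(p : WittVector p k)}) • (⊤ : Submodule (WittVector p k) L))
    -- `v` is a nonzero eigenvector of `ψ ⊗ k` : for every lift `x` of `v`,
    -- `ψ x` reduces to `μ • v`
    (v : L ⧸ pL) (hv : v ≠ 0) (μ : WittVector p k)
    (heig : ∀ x : L, pL.mkQ x = v → pL.mkQ (ψ x) = μ • v) :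
    ∃ vhat : L, (∃ c : WittVector p k, ψ vhat = c • vhat) ∧ vhat ≠ 0 ∧ pL.mkQ vhat = v :=
  stmt3_general p k L ψ N hpN hord pL hpL v hv μ heig
end

section
/- Let W be the ring of Witt vectors of an algebraically closed field k of odd characteristic p, L a finite free W-module, and ψ : L → L a W-linear automorphism of finite order coprime to p. If ℓ ⊆ L ⊗ k is a one-dimensional k-subspace stable under ψ ⊗ k, then there exists a rank one W-submodule M ⊆ L which is a direct summand of L, stable under ψ, and whose reduction M ⊗ k equals ℓ. -/
/-!
Lift a generator of `ℓ` to `v₀ ∈ L`, so that `ψ v₀ ≡ c • v₀ mod p` where `c mod p` is an `N`-th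
root of unity. Its Teichmüller lift `μ` is an `N`-th root of unity in `W`, and
`v = ∑ μ^(N-1-i) • ψ^i v₀` is a `μ`-eigenvector of `ψ`, because
`(ψ - μ) * ∑ ψ^i μ^(N-1-i) = ψ^N - μ^N = 0`. Modulo `p`, `v ≡ N c^(N-1) • v₀` is a unit multiple
of `v₀` since `p ∤ N`, so `M = W ∙ v` reduces to `ℓ`; and `v ∉ pL` makes `L ⧸ M` torsion-free,
hence free over the discrete valuation ring `W`.
-/

open Finset

namespace Module.End

variable {R M : Type*} [CommRing R] [AddCommGroup M] [Module R M]

-- When `f ^ n = 1 = μ ^ n`, this is `n μ^(n-1)` times the projection of `v` onto the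
-- `μ`-eigenspace; the normalisation avoids dividing by `n`.
def eigenAverage (f : Module.End R M) (μ : R) (n : ℕ) (v : M) : M :=
  ∑ i ∈ range n, μ ^ (n - 1 - i) • (f ^ i) v

theorem apply_eigenAverage {f : Module.End R M} {μ : R} {n : ℕ} (hf : f ^ n = 1)
    (hμ : μ ^ n = 1) (v : M) : f (eigenAverage f μ n v) = μ • eigenAverage f μ n v := by
  set a := algebraMap R (Module.End R M) μ
  have hsum : (∑ i ∈ range n, f ^ i * a ^ (n - 1 - i)) v = eigenAverage f μ n v := by
    simp [a, eigenAverage, LinearMap.sum_apply, ← map_pow]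
  have h := congr($((Algebra.commute_algebraMap_right μ f).mul_geom_sum₂ n) v)
  rwa [hf, ← map_pow, hμ, map_one, sub_self, LinearMap.zero_apply, Module.End.mul_apply,
    LinearMap.sub_apply, hsum, Module.algebraMap_end_apply, sub_eq_zero] at h

theorem pow_apply_of_apply_eq_smul {f : Module.End R M} {c : R} {v : M} (hv : f v = c • v)
    (i : ℕ) : (f ^ i) v = c ^ i • v := by
  induction i with
  | zero => simp
  | succ i ih => rw [pow_succ', mul_apply, ih, map_smul, hv, smul_smul, pow_succ]

variable {M' : Type*} [AddCommGroup M'] [Module R M']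

theorem map_pow_apply_of_comp_eq {g : M →ₗ[R] M'} {f : Module.End R M} {f' : Module.End R M'}
    (hfg : g ∘ₗ f = f' ∘ₗ g) {c : R} {v : M} (hv : f' (g v) = c • g v) (i : ℕ) :
    g ((f ^ i) v) = c ^ i • g v := by
  rw [← LinearMap.comp_apply, ← commute_pow_left_of_commute hfg.symm, LinearMap.comp_apply,
    pow_apply_of_apply_eq_smul hv]

theorem map_eigenAverage {g : M →ₗ[R] M'} {f : Module.End R M} {f' : Module.End R M'}
    (hfg : g ∘ₗ f = f' ∘ₗ g) {c : R} {v : M} (hv : f' (g v) = c • g v) (μ : R) (n : ℕ) :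
    g (eigenAverage f μ n v) = (∑ i ∈ range n, c ^ i * μ ^ (n - 1 - i)) • g v := by
  simp only [eigenAverage, map_sum, map_smul, map_pow_apply_of_comp_eq hfg hv, smul_smul,
    sum_smul, mul_comm]

end Module.End

open IsLocalRing in
theorem Module.IsTorsionFree.quotient_span_singleton {R M : Type*} [CommRing R] [IsDomain R]
    [ValuationRing R] [AddCommGroup M] [Module R M] [Module.IsTorsionFree R M] {v : M}
    (hv : v ∉ maximalIdeal R • (⊤ : Submodule R M)) : Module.IsTorsionFree R (M ⧸ R ∙ v) := by
  refine .of_smul_eq_zero fun s x hsx ↦ ?_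
  obtain ⟨y, rfl⟩ := Submodule.Quotient.mk_surjective _ x
  rcases eq_or_ne s 0 with hs | hs
  · exact .inl hs
  rw [← Submodule.Quotient.mk_smul, Submodule.Quotient.mk_eq_zero] at hsx
  obtain ⟨b, hb⟩ := Submodule.mem_span_singleton.mp hsx
  refine .inr <| (Submodule.Quotient.mk_eq_zero _).mpr ?_
  -- `s` and `b` are comparable; `b ∣ s` with a non-unit quotient would put `v` in `𝔪 • M`.
  rcases ValuationRing.dvd_total s b with ⟨t, rfl⟩ | ⟨t, rfl⟩
  · rw [mul_smul] at hb
    rw [← smul_right_injective M hs hb]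
    exact Submodule.smul_mem _ _ (Submodule.mem_span_singleton_self v)
  · rw [mul_smul] at hb
    have hvt : v = t • y := smul_right_injective M (left_ne_zero_of_mul hs) hb
    by_cases ht : IsUnit t
    · rw [← Submodule.smul_mem_iff_of_isUnit _ ht, ← hvt]
      exact Submodule.mem_span_singleton_self v
    · exact absurd (hvt ▸ Submodule.smul_mem_smul ((mem_maximalIdeal t).mpr ht) trivial) hv

open IsLocalRing in
theorem Module.free_quotient_span_singleton {R M : Type*} [CommRing R] [IsDomain R]
    [IsDiscreteValuationRing R] [AddCommGroup M] [Module R M] [Module.Finite R M]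
    [Module.IsTorsionFree R M] {v : M} (hv : v ∉ maximalIdeal R • (⊤ : Submodule R M)) :
    Module.Free R (M ⧸ R ∙ v) :=
  have := Module.IsTorsionFree.quotient_span_singleton hv
  Module.free_of_finite_type_torsion_free'

theorem rank_span_singleton_eq_one {R M : Type*} [CommRing R] [IsDomain R] [AddCommGroup M]
    [Module R M] [Module.IsTorsionFree R M] {v : M} (hv : v ≠ 0) : Module.rank R (R ∙ v) = 1 := by
  simpa using (LinearEquiv.toSpanNonzeroSingleton R M v hv).lift_rank_eq.symm

namespace WittVector

variable {p : ℕ} [Fact p.Prime] {k : Type*} [Field k] [CharP k p]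

theorem constantCoeff_eq_one_of_smul_eq_self {M : Type*} [AddCommGroup M]
    [Module (WittVector p k) M] {a : WittVector p k} {x : M} (hx : x ≠ 0) (h : a • x = x) :
    constantCoeff a = 1 := by
  by_contra ha
  have hunit : IsUnit (a - 1) := isUnit_of_coeff_zero_ne_zero _ <| by
    rwa [← constantCoeff_apply, map_sub, map_one, sub_ne_zero]
  exact hx <| hunit.smul_eq_zero.mp (by rw [sub_smul, one_smul, h, sub_self])

theorem isUnit_geom_sum₂ {c μ : WittVector p k} (hcμ : constantCoeff c = constantCoeff μ)
    (hμ : constantCoeff μ ≠ 0) {n : ℕ} (hn : ¬ p ∣ n) :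
    IsUnit (∑ i ∈ range n, c ^ i * μ ^ (n - 1 - i)) := by
  refine isUnit_of_coeff_zero_ne_zero _ ?_
  rw [← constantCoeff_apply, RingHom.map_geom_sum₂, hcμ, geom_sum₂_self]
  exact mul_ne_zero ((CharP.cast_eq_zero_iff k p n).not.mpr hn) (pow_ne_zero _ hμ)

open Module.End in
theorem exists_eigenvector_lift {L L' : Type*} [AddCommGroup L] [Module (WittVector p k) L]
    [AddCommGroup L'] [Module (WittVector p k) L'] {f : Module.End (WittVector p k) L} {N : ℕ}
    (hf : f ^ N = 1) (hpN : ¬ p ∣ N) {g : L →ₗ[WittVector p k] L'}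
    {f' : Module.End (WittVector p k) L'} (hfg : g ∘ₗ f = f' ∘ₗ g) {v₀ : L} (hv₀ : g v₀ ≠ 0)
    {c : WittVector p k} (hc : f' (g v₀) = c • g v₀) :
    ∃ (μ : WittVector p k) (v : L), IsUnit μ ∧ f v = μ • v ∧
      ∃ s : WittVector p k, IsUnit s ∧ g v = s • g v₀ := by
  have hN : N ≠ 0 := by rintro rfl; exact hpN (dvd_zero p)
  have hcN : constantCoeff c ^ N = 1 := by
    have h := map_pow_apply_of_comp_eq hfg hc N
    rw [hf, one_apply, eq_comm] at h
    rw [← map_pow, constantCoeff_eq_one_of_smul_eq_self hv₀ h]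
  set μ := teichmuller p (constantCoeff c)
  have hμ : μ ^ N = 1 := by rw [← map_pow, hcN, map_one]
  have hμc : constantCoeff μ = constantCoeff c := teichmuller_coeff_zero p _
  refine ⟨μ, eigenAverage f μ N v₀, .of_pow_eq_one hμ hN, apply_eigenAverage hf hμ v₀, _,
    isUnit_geom_sum₂ hμc.symm ?_ hpN, map_eigenAverage hfg hc μ N⟩
  rw [hμc]
  exact ne_zero_pow hN (by rw [hcN]; exact one_ne_zero)

end WittVector

open IsLocalRing in
theorem stmt4_general (p : ℕ) [Fact p.Prime]
    (k : Type*) [Field k] [IsAlgClosed k] [CharP k p]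
    (L : Type*) [AddCommGroup L] [Module (WittVector p k) L]
    [Module.Finite (WittVector p k) L] [Module.Free (WittVector p k) L]
    (ψ : L ≃ₗ[WittVector p k] L) (N : ℕ) (hpN : ¬ p ∣ N)
    (hord : ψ ^ N = 1)
    (pL : Submodule (WittVector p k) L)
    (hpL : pL = (Ideal.span {(p : WittVector p k)}) • (⊤ : Submodule (WittVector p k) L))
    -- `ℓ` is a line in `L/pL`
    (ℓ : Submodule (WittVector p k) (L ⧸ pL))
    (hline : ∃ v : L ⧸ pL, v ≠ 0 ∧ ℓ = Submodule.span (WittVector p k) {v})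
    -- `ℓ` is stable under `ψ ⊗ k`
    (hstab : ∀ x : L, pL.mkQ x ∈ ℓ ↔ pL.mkQ (ψ x) ∈ ℓ) :
    ∃ M : Submodule (WittVector p k) L,
      Module.Free (WittVector p k) M ∧ Module.rank (WittVector p k) M = 1 ∧
      Module.Free (WittVector p k) (L ⧸ M) ∧
      Submodule.map (ψ : L →ₗ[WittVector p k] L) M = M ∧
      Submodule.map pL.mkQ M = ℓ := by
  obtain ⟨_, hv₀, rfl⟩ := hline
  obtain ⟨v₀, rfl⟩ := pL.mkQ_surjective ‹_›
  set f : Module.End (WittVector p k) L := ψ.toLinearMap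
  have hf : f ^ N = 1 := by
    have h := congr(LinearEquiv.automorphismGroup.toLinearMapMonoidHom $hord)
    rwa [map_pow, map_one] at h
  have hfpL : pL ≤ pL.comap f := hpL ▸ Submodule.smul_top_le_comap_smul_top _ f
  obtain ⟨c, hc⟩ := Submodule.mem_span_singleton.mp <|
    (hstab v₀).mp (Submodule.mem_span_singleton_self _)
  obtain ⟨μ, v, hμ, hfv, s, hs, hv⟩ := WittVector.exists_eigenvector_lift hf hpN
    (Submodule.mapQ_mkQ pL pL f (h := hfpL)).symm hv₀ hc.symm
  have hvp : v ∉ maximalIdeal (WittVector p k) • (⊤ : Submodule (WittVector p k) L) := by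
    rw [(IsDiscreteValuationRing.irreducible_iff_uniformizer _).mp (WittVector.irreducible p),
      ← hpL, ← Submodule.Quotient.mk_eq_zero, ← Submodule.mkQ_apply, hv, hs.smul_eq_zero]
    exact hv₀
  have hv0 : v ≠ 0 := fun h ↦ hvp (h ▸ Submodule.zero_mem _)
  refine ⟨_ ∙ v, .of_equiv (LinearEquiv.toSpanNonzeroSingleton _ L v hv0),
    rank_span_singleton_eq_one hv0, Module.free_quotient_span_singleton hvp, ?_, ?_⟩
  · rw [Submodule.map_span, Set.image_singleton, hfv, Submodule.span_singleton_smul_eq hμ]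
  · rw [Submodule.map_span, Set.image_singleton, hv, Submodule.span_singleton_smul_eq hs]

/-- Let `W = W(k)` with `k` algebraically closed of odd characteristic `p`, `L` a finite
free `W`-module and `ψ` an automorphism of `L` of finite order coprime to `p`.  Every
line `ℓ ⊆ L/pL` stable under `ψ mod p` lifts to a `ψ`-stable rank one direct summand
`M ⊆ L` (i.e. `M` free of rank one with `L/M` free) whose reduction equals `ℓ`. -/
theorem stmt4 (p : ℕ) [Fact p.Prime] (hodd : Odd p)
    (k : Type*) [Field k] [IsAlgClosed k] [CharP k p]
    (L : Type*) [AddCommGroup L] [Module (WittVector p k) L]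
    [Module.Finite (WittVector p k) L] [Module.Free (WittVector p k) L]
    (ψ : L ≃ₗ[WittVector p k] L) (N : ℕ) (hN : 0 < N) (hpN : ¬ p ∣ N)
    (hord : ψ ^ N = 1)
    (pL : Submodule (WittVector p k) L)
    (hpL : pL = (Ideal.span {(p : WittVector p k)}) • (⊤ : Submodule (WittVector p k) L))
    -- `ℓ` is a line in `L/pL`
    (ℓ : Submodule (WittVector p k) (L ⧸ pL))
    (hline : ∃ v : L ⧸ pL, v ≠ 0 ∧ ℓ = Submodule.span (WittVector p k) {v})
    -- `ℓ` is stable under `ψ ⊗ k`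
    (hstab : ∀ x : L, pL.mkQ x ∈ ℓ ↔ pL.mkQ (ψ x) ∈ ℓ) :
    ∃ M : Submodule (WittVector p k) L,
      Module.Free (WittVector p k) M ∧ Module.rank (WittVector p k) M = 1 ∧
      Module.Free (WittVector p k) (L ⧸ M) ∧
      Submodule.map (ψ : L →ₗ[WittVector p k] L) M = M ∧
      Submodule.map pL.mkQ M = ℓ :=
  stmt4_general p k L ψ N hpN hord pL hpL ℓ hline hstab
end

section
/- Let W be a complete discrete valuation ring with odd residue characteristic p, let L be a finite free W-module with a symmetric bilinear form B, and suppose there exist x, y ∈ L with B(x, y) a unit in W and B(x, x) ∈ pW. Then L contains a rank one W-submodule M, generated by an element of the form x + p a y for some a ∈ W, such that M is totally isotropic and M ⊗ k is the line spanned by the reduction of x. -/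
/-!
Writing `B x x = p c`, the vector `x + p a y` is isotropic as soon as
`c + 2 B(x, y) a + p B(y, y) a² = 0`. This quadratic has unit linear coefficient and leading
coefficient in `(p)`, so Hensel's lemma in the `p`-adically complete ring `W` gives a root.
Pairing with `y` gives the unit `B(x, y) + p a B(y, y)`, so `x + p a y` spans a free line, and
that line reduces to the line of `x` mod `p`.
-/

open Polynomial

theorem IsUnit.add_of_mem_jacobson_bot {R : Type*} [CommRing R] {u r : R} (hu : IsUnit u)
    (hr : r ∈ (⊥ : Ideal R).jacobson) : IsUnit (u + r) := by
  obtain ⟨u, rfl⟩ := hu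
  have h := u.isUnit.mul (Ideal.mem_jacobson_bot.mp hr ↑u⁻¹)
  rwa [mul_add, mul_one, mul_left_comm, Units.mul_inv, mul_one, add_comm] at h

/-- Roots of `c + v a + d a²` with `v` a unit and `d ∈ I` come from the small root `t` of the
monic `t² + v t + d c`, via `a = -c / (v + t)`. -/
theorem HenselianRing.exists_add_mul_add_mul_sq_eq_zero {R : Type*} [CommRing R] {I : Ideal R}
    [HenselianRing R I] {v : R} (hv : IsUnit v) (c : R) {d : R} (hd : d ∈ I) :
    ∃ a, c + v * a + d * a ^ 2 = 0 := by
  set f : R[X] := X ^ 2 + C v * X + C (d * c)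
  have hf : f.Monic := by unfold f; monicity!
  obtain ⟨t, ht, htI⟩ := HenselianRing.is_henselian f hf 0
    (by simpa [f] using I.mul_mem_right c hd) (by simpa [f] using hv.map (Ideal.Quotient.mk I))
  have hroot : t ^ 2 + v * t + d * c = 0 := by simpa [f] using ht
  obtain ⟨w, hw⟩ := (hv.add_of_mem_jacobson_bot
    (HenselianRing.jac (by simpa using htI))).exists_right_inv
  exact ⟨-c * w, by linear_combination c * w ^ 2 * hroot - (c + c * w * t) * hw⟩

section

variable {R M : Type*} [CommRing R] [AddCommGroup M] [Module R M]

theorem LinearMap.apply_add_smul_self_of_symm (B : M →ₗ[R] M →ₗ[R] R)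
    (hB : ∀ u v, B u v = B v u) (x y : M) (t : R) :
    B (x + t • y) (x + t • y) = B x x + 2 * t * B x y + t ^ 2 * B y y := by
  simp only [map_add, map_smul, LinearMap.add_apply, LinearMap.smul_apply, smul_eq_mul,
    hB y x]
  ring

theorem rank_span_singleton_eq_one_of_isUnit_apply [Nontrivial R] (f : M →ₗ[R] R) {z : M}
    (hz : IsUnit (f z)) : Module.rank R (R ∙ z) = 1 := by
  have hindep : LinearIndepOn R id {z} := LinearIndepOn.singleton' fun r hr => by
    simpa [hz.mul_left_eq_zero] using congr_arg f hr
  rw [rank_span_set hindep, Cardinal.mk_singleton]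

theorem LinearMap.span_singleton_isotropic (B : M →ₗ[R] M →ₗ[R] R) {z : M} (hz : B z z = 0) :
    ∀ u ∈ R ∙ z, ∀ v ∈ R ∙ z, B u v = 0 := by
  intro u hu v hv
  obtain ⟨r, rfl⟩ := Submodule.mem_span_singleton.mp hu
  obtain ⟨s, rfl⟩ := Submodule.mem_span_singleton.mp hv
  simp [hz]

end

theorem Submodule.map_mkQ_span_singleton_of_sub_mem {R M : Type*} [Ring R] [AddCommGroup M]
    [Module R M] (N : Submodule R M) {x z : M} (h : z - x ∈ N) :
    (R ∙ z).map N.mkQ = R ∙ N.mkQ x := by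
  rw [Submodule.map_span, Set.image_singleton, Submodule.mkQ_apply, Submodule.mkQ_apply,
    (Submodule.Quotient.eq N).mpr h]

theorem stmt12_general (W : Type*) [CommRing W] [IsDomain W]
    (p : W)
    [IsAdicComplete (Ideal.span {p}) W] (h2 : IsUnit (2 : W))
    (L : Type*) [AddCommGroup L] [Module W L]
    (B : L →ₗ[W] L →ₗ[W] W) (hsymm : ∀ u v : L, B u v = B v u)
    (x y : L) (hxy : IsUnit (B x y)) (hxx : B x x ∈ Ideal.span {p})
    (pL : Submodule W L) (hpL : pL = (Ideal.span {p}) • (⊤ : Submodule W L)) :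
    ∃ (a : W) (M : Submodule W L),
      M = Submodule.span W {x + (p * a) • y} ∧
      Module.rank W M = 1 ∧
      (∀ u ∈ M, ∀ v ∈ M, B u v = 0) ∧
      Submodule.map pL.mkQ M = Submodule.span W {pL.mkQ x} := by
  have hp : p ∈ Ideal.span {p} := Ideal.mem_span_singleton_self p
  obtain ⟨c, hc⟩ := Ideal.mem_span_singleton.mp hxx
  obtain ⟨a, ha⟩ := HenselianRing.exists_add_mul_add_mul_sq_eq_zero (I := Ideal.span {p})
    (h2.mul hxy) c (Ideal.mul_mem_right (B y y) _ hp)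
  set z := x + (p * a) • y
  have hzz : B z z = 0 := by
    rw [LinearMap.apply_add_smul_self_of_symm B hsymm, hc]
    linear_combination p * ha
  have hzy : IsUnit (B z y) := by
    simpa [z] using hxy.add_of_mem_jacobson_bot
      (HenselianRing.jac (Ideal.mul_mem_right (B y y) _ (Ideal.mul_mem_right a _ hp)))
  have hzx : z - x ∈ pL := by
    simpa [z, hpL] using Submodule.smul_mem_smul (Ideal.mul_mem_right a _ hp) Submodule.mem_top
  exact ⟨a, _, rfl, rank_span_singleton_eq_one_of_isUnit_apply (B.flip y) hzy,
    B.span_singleton_isotropic hzz, pL.map_mkQ_span_singleton_of_sub_mem hzx⟩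

/-- Let `W` be a complete DVR with maximal ideal `(p)`, `p` of odd residue
characteristic (`2` a unit), `L` a finite free `W`-module with a symmetric bilinear
form `B`, and `x, y ∈ L` with `B x y` a unit and `B x x ∈ pW`.  Then there are
`a ∈ W` and a rank one submodule `M`, generated by `x + p a y`, which is totally
isotropic and whose reduction mod `p` is the line spanned by the reduction of `x`. -/
theorem stmt12 (W : Type*) [CommRing W] [IsDomain W] [IsDiscreteValuationRing W]
    (p : W) (hp : IsLocalRing.maximalIdeal W = Ideal.span {p})
    [IsAdicComplete (Ideal.span {p}) W] (h2 : IsUnit (2 : W))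
    (L : Type*) [AddCommGroup L] [Module W L] [Module.Finite W L] [Module.Free W L]
    (B : L →ₗ[W] L →ₗ[W] W) (hsymm : ∀ u v : L, B u v = B v u)
    (x y : L) (hxy : IsUnit (B x y)) (hxx : B x x ∈ Ideal.span {p})
    (pL : Submodule W L) (hpL : pL = (Ideal.span {p}) • (⊤ : Submodule W L)) :
    ∃ (a : W) (M : Submodule W L),
      M = Submodule.span W {x + (p * a) • y} ∧
      Module.rank W M = 1 ∧
      (∀ u ∈ M, ∀ v ∈ M, B u v = 0) ∧
      Submodule.map pL.mkQ M = Submodule.span W {pL.mkQ x} :=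
  stmt12_general W p h2 L B hsymm x y hxy hxx pL hpL
end
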